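/- Let H be a connected k-uniform hypergraph on n ≥ 2 vertices with diameter d. Then λ_{n-1}(H) > 2/(d·k·(k-1)^2·vol(V(H))), where vol(V(H)) = Σ_{v} d_v = km with m the number of edges. -/

import Mathlib

open Finset

variable {n : ℕ}

def hdeg (E : Finset (Finset (Fin n))) (v : Fin n) : ℕ :=
  (E.filter fun e => v ∈ e).card

def codeg (E : Finset (Finset (Fin n))) (u v : Fin n) : ℕ :=
  (E.filter fun e => u ∈ e ∧ v ∈ e).card

noncomputable def adjMat (E : Finset (Finset (Fin n))) : Matrix (Fin n) (Fin n) ℝ :=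
  fun u v => if u = v then 0
    else ∑ e ∈ E.filter (fun e => u ∈ e ∧ v ∈ e), (1 : ℝ) / ((e.card : ℝ) - 1)

noncomputable def lapMat (E : Finset (Finset (Fin n))) : Matrix (Fin n) (Fin n) ℝ :=
  Matrix.diagonal (fun v => (hdeg E v : ℝ)) - adjMat E

noncomputable def normLap (E : Finset (Finset (Fin n))) : Matrix (Fin n) (Fin n) ℝ :=
  Matrix.diagonal (fun v => (hdeg E v : ℝ) ^ (-(1/2) : ℝ)) * lapMat E *
    Matrix.diagonal (fun v => (hdeg E v : ℝ) ^ (-(1/2) : ℝ))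

noncomputable def eigsAsc (M : Matrix (Fin n) (Fin n) ℝ) : Fin n → ℝ :=
  if h : M.IsHermitian then (h.eigenvalues ∘ Tuple.sort h.eigenvalues) else 0

def hreach {n : ℕ} (E : Finset (Finset (Fin n))) (L : ℕ) (u v : Fin n) : Prop :=
  ∃ p : ℕ → Fin n, p 0 = u ∧ p L = v ∧ ∀ i < L, ∃ e ∈ E, p i ∈ e ∧ p (i + 1) ∈ e

noncomputable def hdist {n : ℕ} (E : Finset (Finset (Fin n))) (u v : Fin n) : ℕ :=
  sInf {L | hreach E L u v}

/-! With `f = D^{-1/2} g`, the quadratic form of `L(H)` is `gᵀ L(H) g = ∑ₑ Eₑ(f)` with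
`Eₑ(f) = (k ∑_{v∈e} fᵥ² - (∑_{v∈e} fᵥ)²) / (k - 1)`, and `gᵀ g = ∑ᵥ dᵥ fᵥ²`; by Lagrange's identity
`(f a - f b)² ≤ (k - 1) Eₑ(f)` for `a, b ∈ e`. Some nonzero `g` in the span of eigenvectors for the
two smallest eigenvalues is orthogonal to `D^{1/2} 𝟙`, so `∑ₑ Eₑ(f) ≤ λ_{n-1} ∑ᵥ dᵥ fᵥ²` and
`∑ᵥ dᵥ fᵥ = 0`. Hence `f` changes sign: if `|f|` is maximal at `u` and `f u f v < 0`, then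
`∑ᵥ dᵥ fᵥ² < vol · (f u - f v)²`. A shortest walk from `u` to `v` has at most `d` steps and uses
distinct edges, so Cauchy–Schwarz along it gives `(f u - f v)² ≤ d (k - 1) ∑ₑ Eₑ(f)`. Altogether
`λ_{n-1} > 1 / (vol · d · (k - 1)) ≥ 2 / (d k (k - 1)² vol)`. -/

open Matrix

lemma exists_mul_add_mul_eq_zero (c d : ℝ) :
    ∃ a b : ℝ, a ^ 2 + b ^ 2 ≠ 0 ∧ a * c + b * d = 0 := by
  by_cases h : c = 0 ∧ d = 0
  · exact ⟨1, 0, by norm_num, by simp [h.1]⟩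
  · refine ⟨d, -c, ?_, by ring⟩
    contrapose! h
    constructor <;> nlinarith [sq_nonneg c, sq_nonneg d]

theorem Matrix.IsHermitian.exists_orthogonal_dotProduct_mulVec_le
    {M : Matrix (Fin n) (Fin n) ℝ} (hM : M.IsHermitian) {i : Fin n} (hi : 0 < (i : ℕ))
    (w : Fin n → ℝ) : ∃ g ≠ 0, g ⬝ᵥ w = 0 ∧ g ⬝ᵥ (M *ᵥ g) ≤ eigsAsc M i * (g ⬝ᵥ g) := by
  set σ := Tuple.sort hM.eigenvalues
  set p := σ ⟨0, by omega⟩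
  set q := σ i
  set φ : Fin n → Fin n → ℝ := fun j => ⇑(hM.eigenvectorBasis j)
  have hφ : ∀ a b, φ a ⬝ᵥ φ b = if a = b then 1 else 0 := fun a b => by
    have h := orthonormal_iff_ite.mp hM.eigenvectorBasis.orthonormal a b
    rw [PiLp.inner_apply] at h
    simpa [φ, dotProduct, mul_comm] using h
  have hMφ : ∀ j, M *ᵥ φ j = hM.eigenvalues j • φ j := hM.mulVec_eigenvectorBasis
  have hpq : p ≠ q := fun h => by
    have := congrArg Fin.val (σ.injective h)
    simp only at this
    omega
  have hle : hM.eigenvalues p ≤ hM.eigenvalues q :=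
    Tuple.monotone_sort hM.eigenvalues (Fin.le_def.mpr (Nat.zero_le _))
  obtain ⟨a, b, hab, hw⟩ := exists_mul_add_mul_eq_zero (φ p ⬝ᵥ w) (φ q ⬝ᵥ w)
  have hgg : (a • φ p + b • φ q) ⬝ᵥ (a • φ p + b • φ q) = a ^ 2 + b ^ 2 := by
    simp [add_dotProduct, dotProduct_add, hφ, hpq, hpq.symm, sq]
  refine ⟨a • φ p + b • φ q, fun h0 => hab (by rw [← hgg, h0, dotProduct_zero]), ?_, ?_⟩
  · simpa [add_dotProduct] using hw
  · rw [eigsAsc, dif_pos hM, Function.comp_apply, hgg]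
    simp only [mulVec_add, mulVec_smul, hMφ, add_dotProduct, dotProduct_add, smul_dotProduct,
      dotProduct_smul, hφ, if_neg hpq, if_neg hpq.symm, if_pos, smul_eq_mul]
    nlinarith [sq_nonneg a]

noncomputable def edgeEnergy {ι : Type*} (e : Finset ι) (f : ι → ℝ) : ℝ :=
  ((e.card : ℝ) * ∑ v ∈ e, f v ^ 2 - (∑ v ∈ e, f v) ^ 2) / ((e.card : ℝ) - 1)

lemma card_mul_sum_sq_sub_sq_sum {ι : Type*} (s : Finset ι) (f : ι → ℝ) :
    2 * ((s.card : ℝ) * ∑ i ∈ s, f i ^ 2 - (∑ i ∈ s, f i) ^ 2)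
      = ∑ i ∈ s, ∑ j ∈ s, (f i - f j) ^ 2 := by
  simp only [sub_sq, Finset.sum_add_distrib, Finset.sum_sub_distrib, Finset.sum_const,
    nsmul_eq_mul, ← Finset.mul_sum, ← Finset.sum_mul]
  ring

lemma sq_sub_le_card_mul_sum_sq_sub_sq_sum {ι : Type*} {s : Finset ι} {a b : ι} (ha : a ∈ s)
    (hb : b ∈ s) (f : ι → ℝ) :
    (f a - f b) ^ 2 ≤ (s.card : ℝ) * ∑ i ∈ s, f i ^ 2 - (∑ i ∈ s, f i) ^ 2 := by
  have hrow : ∀ i ∈ s, 0 ≤ ∑ j ∈ s, (f i - f j) ^ 2 := fun i _ => by positivity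
  have h := card_mul_sum_sq_sub_sq_sum s f
  rcases eq_or_ne a b with rfl | hab
  · nlinarith [Finset.sum_nonneg hrow]
  · have hpair := Finset.add_le_sum hrow ha hb hab
    have hba := Finset.single_le_sum (fun j _ => sq_nonneg (f a - f j)) hb
    have hab' := Finset.single_le_sum (fun j _ => sq_nonneg (f b - f j)) ha
    nlinarith [sq_abs (f a - f b)]

lemma sq_sub_le_mul_edgeEnergy {ι : Type*} {e : Finset ι} {a b : ι} (ha : a ∈ e) (hb : b ∈ e)
    (f : ι → ℝ) : (f a - f b) ^ 2 ≤ ((e.card : ℝ) - 1) * edgeEnergy e f := by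
  by_cases h1 : e.card = 1
  · obtain rfl : a = b := Finset.card_le_one.mp h1.le a ha b hb
    simp [h1]
  · rw [edgeEnergy, mul_div_cancel₀ _ (sub_ne_zero.mpr (by exact_mod_cast h1))]
    exact sq_sub_le_card_mul_sum_sq_sub_sq_sum ha hb f

lemma sub_one_mul_edgeEnergy_nonneg {ι : Type*} (e : Finset ι) (f : ι → ℝ) :
    0 ≤ ((e.card : ℝ) - 1) * edgeEnergy e f := by
  rcases e.eq_empty_or_nonempty with rfl | ⟨a, ha⟩
  · simp [edgeEnergy]
  · simpa using sq_sub_le_mul_edgeEnergy ha ha f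

lemma lapMat_apply (E : Finset (Finset (Fin n))) (u v : Fin n) :
    lapMat E u v = ∑ e ∈ E,
      if u ∈ e ∧ v ∈ e then (if u = v then 1 else -((e.card : ℝ) - 1)⁻¹) else 0 := by
  rcases eq_or_ne u v with rfl | huv
  · simp [lapMat, adjMat, hdeg]
  · simp [lapMat, adjMat, huv, Finset.sum_filter, ← Finset.sum_neg_distrib, neg_ite]

lemma sum_sum_mul_ite_mul {ι : Type*} [DecidableEq ι] (s : Finset ι) (c : ℝ) (f : ι → ℝ) :
    ∑ u ∈ s, ∑ v ∈ s, f u * (if u = v then 1 else -c) * f v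
      = (1 + c) * ∑ v ∈ s, f v ^ 2 - c * (∑ v ∈ s, f v) ^ 2 := by
  have h : ∀ u v, f u * (if u = v then 1 else -c) * f v
      = (if u = v then (1 + c) * f v ^ 2 else 0) - c * (f u * f v) := fun u v => by
    split_ifs with h
    · subst h; ring
    · ring
  simp only [h, Finset.sum_sub_distrib, Finset.sum_ite_eq, Finset.sum_ite_mem, Finset.inter_self,
    ← Finset.mul_sum, ← Finset.sum_mul, sq]

theorem dotProduct_lapMat_mulVec (E : Finset (Finset (Fin n))) (hE : ∀ e ∈ E, e.card ≠ 1)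
    (f : Fin n → ℝ) : f ⬝ᵥ (lapMat E *ᵥ f) = ∑ e ∈ E, edgeEnergy e f := by
  have hrestrict : ∀ (e : Finset (Fin n)) (c : ℝ),
      ∑ u, ∑ v, f u * (if u ∈ e ∧ v ∈ e then (if u = v then 1 else -c) else 0) * f v
        = ∑ u ∈ e, ∑ v ∈ e, f u * (if u = v then 1 else -c) * f v := fun e c => by
    simp only [ite_and, mul_ite, ite_mul, mul_zero, zero_mul]
    simp [Finset.sum_ite_mem]
  calc f ⬝ᵥ (lapMat E *ᵥ f)
      = ∑ e ∈ E, ∑ u, ∑ v, f u * (if u ∈ e ∧ v ∈ e then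
          (if u = v then 1 else -((e.card : ℝ) - 1)⁻¹) else 0) * f v := by
        simp only [dotProduct, mulVec, lapMat_apply, Finset.mul_sum, Finset.sum_mul, mul_assoc]
        rw [Finset.sum_congr rfl fun u _ => Finset.sum_comm, Finset.sum_comm]
    _ = ∑ e ∈ E, edgeEnergy e f := by
        refine Finset.sum_congr rfl fun e he => ?_
        have : (e.card : ℝ) - 1 ≠ 0 := sub_ne_zero.mpr (by exact_mod_cast hE e he)
        rw [hrestrict, sum_sum_mul_ite_mul, edgeEnergy]
        field_simp
        ring

lemma isHermitian_lapMat (E : Finset (Finset (Fin n))) : (lapMat E).IsHermitian := by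
  ext u v
  simp only [conjTranspose_apply, star_trivial, lapMat_apply]
  exact Finset.sum_congr rfl fun e _ => by simp only [and_comm, eq_comm]

noncomputable def degInvSqrt (E : Finset (Finset (Fin n))) (v : Fin n) : ℝ :=
  (hdeg E v : ℝ) ^ (-(1/2) : ℝ)

lemma normLap_eq (E : Finset (Finset (Fin n))) :
    normLap E = diagonal (degInvSqrt E) * lapMat E * diagonal (degInvSqrt E) := rfl

lemma isHermitian_normLap (E : Finset (Finset (Fin n))) : (normLap E).IsHermitian := by
  simpa [normLap_eq, diagonal_conjTranspose] using
    isHermitian_mul_mul_conjTranspose (diagonal (degInvSqrt E)) (isHermitian_lapMat E)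

lemma dotProduct_diagonal_mul_mul_diagonal_mulVec {R ι : Type*} [CommRing R] [Fintype ι]
    [DecidableEq ι] (s g : ι → R) (A : Matrix ι ι R) :
    g ⬝ᵥ ((diagonal s * A * diagonal s) *ᵥ g) = (s * g) ⬝ᵥ (A *ᵥ (s * g)) := by
  have hleft : g ᵥ* diagonal s = s * g :=
    funext fun x => (vecMul_diagonal g s x).trans (mul_comm _ _)
  rw [Matrix.mul_assoc, ← mulVec_mulVec, ← mulVec_mulVec, dotProduct_mulVec, hleft,
    funext (mulVec_diagonal s g)]
  rfl

theorem dotProduct_normLap_mulVec (E : Finset (Finset (Fin n))) (hE : ∀ e ∈ E, e.card ≠ 1)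
    (g : Fin n → ℝ) : g ⬝ᵥ (normLap E *ᵥ g) = ∑ e ∈ E, edgeEnergy e (degInvSqrt E * g) := by
  rw [normLap_eq, dotProduct_diagonal_mul_mul_diagonal_mulVec, dotProduct_lapMat_mulVec E hE]

lemma mul_rpow_neg_half_sq {x : ℝ} (hx : 0 < x) : x * (x ^ (-(1/2) : ℝ)) ^ 2 = 1 := by
  rw [← Real.rpow_natCast, ← Real.rpow_mul hx.le]
  norm_num [Real.rpow_neg_one, hx.ne']

lemma sum_hdeg_mul_degInvSqrt_mul_sq {E : Finset (Finset (Fin n))} (hdeg_pos : ∀ v, 0 < hdeg E v)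
    (g : Fin n → ℝ) : ∑ v, (hdeg E v : ℝ) * (degInvSqrt E * g) v ^ 2 = g ⬝ᵥ g :=
  Finset.sum_congr rfl fun v _ => by
    rw [Pi.mul_apply, mul_pow, ← mul_assoc, degInvSqrt,
      mul_rpow_neg_half_sq (by exact_mod_cast hdeg_pos v)]
    ring

section Walks

variable {E : Finset (Finset (Fin n))} {u v : Fin n}

lemma hdist_le {L : ℕ} (h : hreach E L u v) : hdist E u v ≤ L := Nat.sInf_le h

lemma hdist_le_iSup (u v : Fin n) : hdist E u v ≤ ⨆ u : Fin n, ⨆ v : Fin n, hdist E u v :=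
  le_ciSup_of_le (Set.finite_range _).bddAbove u (le_ciSup (Set.finite_range _).bddAbove v)

lemma hdeg_pos_of_hreach {L : ℕ} (h : hreach E L u v) (huv : u ≠ v) : 0 < hdeg E u := by
  obtain ⟨p, hp0, hpL, hstep⟩ := h
  obtain ⟨e, he, hue, -⟩ := hstep 0 (Nat.pos_of_ne_zero fun hL => huv (by rw [← hp0, ← hpL, hL]))
  exact Finset.card_pos.mpr ⟨e, Finset.mem_filter.mpr ⟨he, hp0 ▸ hue⟩⟩

lemma hdeg_pos (hn : 2 ≤ n) (hconn : ∀ u v : Fin n, ∃ L, hreach E L u v) (v : Fin n) :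
    0 < hdeg E v := by
  have : Nontrivial (Fin n) := Fin.nontrivial_iff_two_le.mpr hn
  obtain ⟨w, hw⟩ := exists_ne v
  exact hdeg_pos_of_hreach (hconn v w).choose_spec hw.symm

lemma hreach_of_repeated_edge {L : ℕ} {p : ℕ → Fin n} {ee : ℕ → Finset (Fin n)}
    (hp0 : p 0 = u) (hpL : p L = v) (hstep : ∀ i < L, ee i ∈ E ∧ p i ∈ ee i ∧ p (i + 1) ∈ ee i)
    {i j : ℕ} (hij : i < j) (hjL : j < L) (hrep : ee i = ee j) :
    hreach E (L - (j - i)) u v := by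
  refine ⟨fun m => if m ≤ i then p m else p (m + (j - i)), by simp [hp0], ?_, fun m hm => ?_⟩
  · simp only [if_neg (show ¬L - (j - i) ≤ i by omega),
      Nat.sub_add_cancel (show j - i ≤ L by omega), hpL]
  · rcases lt_trichotomy m i with hmi | rfl | hmi
    · obtain ⟨he, h1, h2⟩ := hstep m (by omega)
      exact ⟨ee m, he, by simpa [hmi.le] using h1, by simpa [Nat.succ_le_of_lt hmi] using h2⟩
    · obtain ⟨he, -, h2⟩ := hstep j hjL
      refine ⟨ee j, he, by simpa [← hrep] using (hstep m (by omega)).2.1, ?_⟩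
      simpa [show m + 1 + (j - m) = j + 1 by omega] using h2
    · obtain ⟨he, h1, h2⟩ := hstep (m + (j - i)) (by omega)
      refine ⟨ee (m + (j - i)), he, by simpa [hmi.not_ge] using h1, ?_⟩
      simpa [show ¬m + 1 ≤ i by omega, show m + 1 + (j - i) = m + (j - i) + 1 by omega] using h2

lemma exists_walk_hdist_injOn_edges (h : ∃ L, hreach E L u v) :
    ∃ (p : ℕ → Fin n) (ee : ℕ → Finset (Fin n)), p 0 = u ∧ p (hdist E u v) = v ∧
      (∀ i < hdist E u v, ee i ∈ E ∧ p i ∈ ee i ∧ p (i + 1) ∈ ee i) ∧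
      Set.InjOn ee (Set.Iio (hdist E u v)) := by
  obtain ⟨p, hp0, hpL, hstep⟩ : hreach E (hdist E u v) u v := Nat.sInf_mem h
  choose! ee hee using hstep
  refine ⟨p, ee, hp0, hpL, hee, ?_⟩
  have hshort : ∀ i j, i < j → j < hdist E u v → ee i ≠ ee j := fun i j hij hj hrep => by
    have := hdist_le (hreach_of_repeated_edge hp0 hpL hee hij hj hrep)
    omega
  intro i hi j hj hrep
  rcases lt_trichotomy i j with hij | hij | hij
  · exact absurd hrep (hshort i j hij hj)
  · exact hij
  · exact absurd hrep.symm (hshort j i hij hi)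

theorem sq_sub_le_hdist_mul_sum_edgeEnergy (h : ∃ L, hreach E L u v) (f : Fin n → ℝ) :
    (f u - f v) ^ 2 ≤ hdist E u v * ∑ e ∈ E, ((e.card : ℝ) - 1) * edgeEnergy e f := by
  obtain ⟨p, ee, hp0, hpL, hstep, hinj⟩ := exists_walk_hdist_injOn_edges h
  set L := hdist E u v
  have hinj' : Set.InjOn ee (Finset.range L) := by simpa [Set.Iio] using hinj
  have hsub : (Finset.range L).image ee ⊆ E := by
    simpa [Finset.image_subset_iff] using fun i hi => (hstep i hi).1
  calc (f u - f v) ^ 2 = (∑ i ∈ Finset.range L, (f (p i) - f (p (i + 1)))) ^ 2 := by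
        rw [Finset.sum_range_sub', hp0, hpL]
    _ ≤ L * ∑ i ∈ Finset.range L, (f (p i) - f (p (i + 1))) ^ 2 := by
        simpa using sq_sum_le_card_mul_sum_sq (s := Finset.range L)
          (f := fun i => f (p i) - f (p (i + 1)))
    _ ≤ L * ∑ i ∈ Finset.range L, (((ee i).card : ℝ) - 1) * edgeEnergy (ee i) f := by
        gcongr with i hi
        obtain ⟨-, hpi, hpi'⟩ := hstep i (Finset.mem_range.mp hi)
        exact sq_sub_le_mul_edgeEnergy hpi hpi' f
    _ = L * ∑ e ∈ (Finset.range L).image ee, ((e.card : ℝ) - 1) * edgeEnergy e f := by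
        rw [Finset.sum_image hinj']
    _ ≤ L * ∑ e ∈ E, ((e.card : ℝ) - 1) * edgeEnergy e f := by
        gcongr
        exact fun e _ _ => sub_one_mul_edgeEnergy_nonneg e f

end Walks

theorem exists_sum_mul_sq_lt_sum_mul_sq_sub {ι : Type*} [Fintype ι] {w f : ι → ℝ}
    (hw : ∀ i, 0 < w i) (hf : f ≠ 0) (hsum : ∑ i, w i * f i = 0) :
    ∃ i j, ∑ l, w l * f l ^ 2 < (∑ l, w l) * (f i - f j) ^ 2 := by
  obtain ⟨l, hl⟩ : ∃ l, f l ≠ 0 := Function.ne_iff.mp hf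
  obtain ⟨i, -, hi⟩ :=
    Finset.exists_max_image Finset.univ (fun l => f l ^ 2) ⟨l, Finset.mem_univ l⟩
  have hfi : 0 < f i * f i := by
    have := hi l (Finset.mem_univ l)
    have : 0 < f l ^ 2 := by positivity
    nlinarith
  obtain ⟨j, hj⟩ : ∃ j, f i * f j < 0 := by
    by_contra! h
    have hpos : 0 < ∑ l, w l * (f i * f l) :=
      Finset.sum_pos' (fun l _ => mul_nonneg (hw l).le (h l))
        ⟨i, Finset.mem_univ i, mul_pos (hw i) hfi⟩
    have hzero : ∑ l, w l * (f i * f l) = 0 := by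
      simp only [mul_left_comm (w _), ← Finset.mul_sum, hsum, mul_zero]
    exact hpos.ne' hzero
  have hwpos : 0 < ∑ l, w l := Finset.sum_pos (fun l _ => hw l) ⟨l, Finset.mem_univ l⟩
  refine ⟨i, j, ?_⟩
  calc ∑ l, w l * f l ^ 2 ≤ ∑ l, w l * f i ^ 2 :=
        Finset.sum_le_sum fun l hl => mul_le_mul_of_nonneg_left (hi l hl) (hw l).le
    _ = (∑ l, w l) * f i ^ 2 := (Finset.sum_mul ..).symm
    _ < (∑ l, w l) * (f i - f j) ^ 2 := mul_lt_mul_of_pos_left (by nlinarith) hwpos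

theorem sum_hdeg_mul_sq_lt {E : Finset (Finset (Fin n))} {d : ℕ}
    (hconn : ∀ u v : Fin n, ∃ L, hreach E L u v) (hdist_le : ∀ u v, hdist E u v ≤ d)
    (hdeg_pos : ∀ v, 0 < hdeg E v) {f : Fin n → ℝ} (hf : f ≠ 0)
    (hsum : ∑ v, (hdeg E v : ℝ) * f v = 0) :
    ∑ v, (hdeg E v : ℝ) * f v ^ 2
      < (∑ v, (hdeg E v : ℝ)) * d * ∑ e ∈ E, ((e.card : ℝ) - 1) * edgeEnergy e f := by
  obtain ⟨u, v, huv⟩ :=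
    exists_sum_mul_sq_lt_sum_mul_sq_sub (fun v => by exact_mod_cast hdeg_pos v) hf hsum
  have henergy : 0 ≤ ∑ e ∈ E, ((e.card : ℝ) - 1) * edgeEnergy e f :=
    Finset.sum_nonneg fun e _ => sub_one_mul_edgeEnergy_nonneg e f
  calc _ < _ := huv
    _ ≤ (∑ v, (hdeg E v : ℝ)) * (hdist E u v * ∑ e ∈ E, ((e.card : ℝ) - 1) * edgeEnergy e f) := by
        gcongr
        exact sq_sub_le_hdist_mul_sum_edgeEnergy (hconn u v) f
    _ ≤ (∑ v, (hdeg E v : ℝ)) * (d * ∑ e ∈ E, ((e.card : ℝ) - 1) * edgeEnergy e f) := by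
        gcongr
        exact_mod_cast hdist_le u v
    _ = _ := by ring

lemma two_div_lt_of_one_lt_mul {k vol d μ : ℝ} (hk : 2 ≤ k) (hvol : 0 ≤ vol) (hd : 0 ≤ d)
    (h : 1 < vol * d * (k - 1) * μ) : 2 / (d * k * (k - 1) ^ 2 * vol) < μ := by
  have hX : 0 < vol * d * (k - 1) := by
    refine (mul_nonneg (mul_nonneg hvol hd) (by linarith)).lt_of_ne fun h0 => ?_
    rw [← h0, zero_mul] at h
    linarith
  rw [div_lt_iff₀ (by nlinarith)]
  nlinarith

theorem stmt15 (n k d : ℕ) (hn : 2 ≤ n) (hk : 2 ≤ k) (E : Finset (Finset (Fin n)))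
    (hunif : ∀ e ∈ E, e.card = k)
    (hconn : ∀ u v : Fin n, ∃ L, hreach E L u v)
    (hd : d = ⨆ u : Fin n, ⨆ v : Fin n, hdist E u v) :
    2 / ((d : ℝ) * (k : ℝ) * ((k : ℝ) - 1) ^ 2 * (∑ v : Fin n, (hdeg E v : ℝ))) <
      eigsAsc (normLap E) ⟨1, by omega⟩ := by
  have hE : ∀ e ∈ E, e.card ≠ 1 := fun e he => by rw [hunif e he]; omega
  have hdeg_pos := hdeg_pos hn hconn
  obtain ⟨g, hg0, hgw, hgμ⟩ := (isHermitian_normLap E).exists_orthogonal_dotProduct_mulVec_le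
    (i := ⟨1, by omega⟩) one_pos (fun v => hdeg E v * degInvSqrt E v)
  set f := degInvSqrt E * g
  have hnorm : ∑ v, (hdeg E v : ℝ) * f v ^ 2 = g ⬝ᵥ g := sum_hdeg_mul_degInvSqrt_mul_sq hdeg_pos g
  have hsum : ∑ v, (hdeg E v : ℝ) * f v = 0 := by
    rw [← hgw, dotProduct]
    exact Finset.sum_congr rfl fun v _ => by simp only [f, Pi.mul_apply]; ring
  have hf : f ≠ 0 := fun h0 => hg0 (dotProduct_self_eq_zero.mp (by rw [← hnorm, h0]; simp))
  have hQ : ∑ e ∈ E, ((e.card : ℝ) - 1) * edgeEnergy e f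
      = ((k : ℝ) - 1) * (g ⬝ᵥ (normLap E *ᵥ g)) := by
    rw [dotProduct_normLap_mulVec E hE, Finset.mul_sum]
    exact Finset.sum_congr rfl fun e he => by rw [hunif e he]
  have hpoinc := sum_hdeg_mul_sq_lt hconn (fun u v => hd ▸ hdist_le_iSup u v) hdeg_pos hf hsum
  rw [hnorm, hQ] at hpoinc
  have hk' : (2 : ℝ) ≤ k := by exact_mod_cast hk
  refine two_div_lt_of_one_lt_mul hk' (by positivity) (by positivity)
    (lt_of_mul_lt_mul_right ?_ (by simpa using dotProduct_star_self_nonneg g))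
  calc 1 * (g ⬝ᵥ g) < _ := by rwa [one_mul]
    _ ≤ _ := mul_le_mul_of_nonneg_left (mul_le_mul_of_nonneg_left hgμ (by linarith))
        (by positivity)
    _ = _ := by ring
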